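/- If S is a row-stochastic matrix obtained by row-wise softmax of W and σ is a permutation with permutation matrix P, then softmax(W · Pᵀ) · P · Z = softmax(W) · Z for any matrix Z. (Column-permuted attention weights applied to row-permuted features give the same output.) -/

import Mathlib

open Matrix

noncomputable def Matrix.rowSoftmax {m n : Type*} [Fintype n] (M : Matrix m n ℝ) : Matrix m n ℝ :=
  of fun i j => Real.exp (M i j) / ∑ k, Real.exp (M i k)

namespace Matrix

variable {l m n o : Type*}

theorem rowSoftmax_submatrix [Fintype n] [Fintype o] (M : Matrix m n ℝ) (f : l → m) (e : o ≃ n) :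
    rowSoftmax (M.submatrix f e) = (rowSoftmax M).submatrix f e := by
  ext i j
  simp only [rowSoftmax, submatrix_apply, of_apply, e.sum_comp fun k => Real.exp (M (f i) k)]

theorem mul_transpose_permMatrix {R : Type*} [NonAssocSemiring R] [Fintype n] [DecidableEq n]
    (M : Matrix m n R) (σ : Equiv.Perm n) : M * (σ.permMatrix R)ᵀ = M.submatrix id σ := by
  rw [transpose_permMatrix, PEquiv.mul_toMatrix_toPEquiv, Equiv.Perm.inv_def, Equiv.symm_symm]

theorem rowSoftmax_mul_transpose_permMatrix_mul_permMatrix [Fintype n] [DecidableEq n]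
    (M : Matrix m n ℝ) (σ : Equiv.Perm n) :
    rowSoftmax (M * (σ.permMatrix ℝ)ᵀ) * σ.permMatrix ℝ = rowSoftmax M := by
  rw [mul_transpose_permMatrix, rowSoftmax_submatrix, PEquiv.mul_toMatrix_toPEquiv,
    submatrix_submatrix, Function.comp_id, Equiv.self_comp_symm, submatrix_id_id]

end Matrix

theorem softmax_perm_cancel {N' N d : ℕ} (W : Matrix (Fin N') (Fin N) ℝ)
    (Z : Matrix (Fin N) (Fin d) ℝ) (σ : Equiv.Perm (Fin N)) :
    let softmax : Matrix (Fin N') (Fin N) ℝ → Matrix (Fin N') (Fin N) ℝ :=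
      fun M => Matrix.of fun i j => Real.exp (M i j) / ∑ k, Real.exp (M i k)
    let P : Matrix (Fin N) (Fin N) ℝ := σ.permMatrix ℝ
    softmax (W * Pᵀ) * P * Z = softmax W * Z := by
  show rowSoftmax (W * (σ.permMatrix ℝ)ᵀ) * σ.permMatrix ℝ * Z = rowSoftmax W * Z
  rw [rowSoftmax_mul_transpose_permMatrix_mul_permMatrix]
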